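/- arXiv:2402.09496 — 2 statements merged into one kernel-verified Lean document; each statement's English description precedes it below -/
import Mathlib

section
/- On a lattice L, if T and S are 2-uniform tolerances, a ≠ b, and some element c is both a lower T-neighbor of a and a lower S-neighbor of b, then a ∨ b is an upper S-neighbor of a and an upper T-neighbor of b. -/
/-- A tolerance on a lattice: reflexive, symmetric, compatible with join and meet. -/
def LatticeTolerance {L : Type*} [Lattice L] (T : L → L → Prop) : Prop :=
  (∀ x, T x x) ∧ (∀ x y, T x y → T y x) ∧
  (∀ x y z u, T x y → T z u → T (x ⊔ z) (y ⊔ u)) ∧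
  (∀ x y z u, T x y → T z u → T (x ⊓ z) (y ⊓ u))

/-- A block of `T`: a maximal subset `B` with `B × B ⊆ T`. -/
def IsBlock {L : Type*} [Lattice L] (T : L → L → Prop) (B : Set L) : Prop :=
  (∀ x ∈ B, ∀ y ∈ B, T x y) ∧ ∀ C : Set L, B ⊆ C → (∀ x ∈ C, ∀ y ∈ C, T x y) → C = B

/-- A 2-uniform tolerance on a lattice: all blocks have exactly two elements. -/
def TwoUniformLat {L : Type*} [Lattice L] (T : L → L → Prop) : Prop :=
  LatticeTolerance T ∧ ∀ B : Set L, IsBlock T B → ∃ a b : L, a ≠ b ∧ B = {a, b}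

/-- `a` is a lower `T`-neighbor of `b` (and `b` an upper `T`-neighbor of `a`). -/
def LowerNbr {L : Type*} [Lattice L] (T : L → L → Prop) (a b : L) : Prop := a ⋖ b ∧ T a b

/-- Every pairwise `T`-related set extends to a block (Zorn). -/
lemma exists_block_aux {L : Type*} [Lattice L] (T : L → L → Prop)
    (A : Set L) (hA : ∀ x ∈ A, ∀ y ∈ A, T x y) :
    ∃ B, IsBlock T B ∧ A ⊆ B := by
  have := zorn_subset_nonempty {C : Set L | ∀ x ∈ C, ∀ y ∈ C, T x y}
    (fun c hc hchain hne => by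
      refine ⟨⋃₀ c, ?_, fun s hs => Set.subset_sUnion_of_mem hs⟩
      rintro x hx y hy
      obtain ⟨s, hs, hxs⟩ := hx
      obtain ⟨t, ht, hyt⟩ := hy
      rcases hchain.total hs ht with h | h
      · exact hc ht x (h hxs) y hyt
      · exact hc hs x hxs y (h hyt)) A hA
  obtain ⟨B, hAB, hmax⟩ := this
  exact ⟨B, ⟨hmax.1, fun C hBC hC => (hmax.2 hC hBC).antisymm hBC⟩, hAB⟩

/-- For a 2-uniform tolerance, any strictly `T`-related comparable pair is a covering pair. -/
lemma tol_cov_aux {L : Type*} [Lattice L] {T : L → L → Prop} (hT : TwoUniformLat T)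
    {x y : L} (hxy : T x y) (hlt : x < y) : x ⋖ y := by
  refine ⟨hlt, fun z hxz hzy => ?_⟩
  have hrefl := hT.1.1
  have hxz' : T x z := by
    have := hT.1.2.2.2 x y z z hxy (hrefl z)
    rwa [inf_eq_left.2 hxz.le, inf_eq_right.2 hzy.le] at this
  have hzy' : T z y := by
    have := hT.1.2.2.1 x y z z hxy (hrefl z)
    rwa [sup_eq_right.2 hxz.le, sup_eq_left.2 hzy.le] at this
  have hsym := hT.1.2.1
  obtain ⟨B, hB, hsub⟩ := exists_block_aux T {x, z, y} (by
    rintro u (rfl | rfl | rfl) v (rfl | rfl | rfl) <;>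
      solve_by_elim [hrefl, hsym, hxz', hzy', hxy])
  obtain ⟨p, q, hpq, rfl⟩ := hT.2 B hB
  have h1 := hsub (show x ∈ ({x, z, y} : Set L) by simp)
  have h2 := hsub (show z ∈ ({x, z, y} : Set L) by simp)
  have h3 := hsub (show y ∈ ({x, z, y} : Set L) by simp)
  simp only [Set.mem_insert_iff, Set.mem_singleton_iff] at h1 h2 h3
  rcases h1 with rfl | rfl <;> rcases h2 with rfl | rfl <;> rcases h3 with rfl | rfl <;>
    first
    | exact hxz.ne rfl | exact hzy.ne rfl | exact (hxz.trans hzy).ne rfl | exact hpq rfl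

/-- On a lattice, if `c` is a lower `T`-neighbor of `a` and a lower `S`-neighbor
of `b` with `a ≠ b`, then `a ⊔ b` is an upper `S`-neighbor of `a` and an upper
`T`-neighbor of `b`. -/
theorem stmt_3 {L : Type*} [Lattice L] (T S : L → L → Prop)
    (hL : ∃ x y z : L, x ≠ y ∧ x ≠ z ∧ y ≠ z)
    (hT : TwoUniformLat T) (hS : TwoUniformLat S)
    (a b c : L) (hab : a ≠ b) (hca : LowerNbr T c a) (hcb : LowerNbr S c b) :
    LowerNbr S a (a ⊔ b) ∧ LowerNbr T b (a ⊔ b) := by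
  obtain ⟨hca_cov, hca_T⟩ := hca
  obtain ⟨hcb_cov, hcb_S⟩ := hcb
  have hnab : ¬ a ≤ b := fun h => by
    rcases (hcb_cov.2 hca_cov.1 (lt_of_le_of_ne h hab) : False) with ⟨⟩
  have hnba : ¬ b ≤ a := fun h => by
    rcases (hca_cov.2 hcb_cov.1 (lt_of_le_of_ne h (Ne.symm hab)) : False) with ⟨⟩
  have hlt1 : a < a ⊔ b := lt_of_le_of_ne le_sup_left (fun h => hnba (by rw [h]; exact le_sup_right))
  have hlt2 : b < a ⊔ b := lt_of_le_of_ne le_sup_right (fun h => hnab (by rw [h]; exact le_sup_left))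
  have hSa : S a (a ⊔ b) := by
    have := hS.1.2.2.1 a a c b (hS.1.1 a) hcb_S
    rwa [sup_eq_left.2 hca_cov.1.le] at this
  have hTb : T b (a ⊔ b) := by
    have := hT.1.2.2.1 c a b b hca_T (hT.1.1 b)
    rwa [sup_eq_right.2 hcb_cov.1.le] at this
  exact ⟨⟨tol_cov_aux hS hSa hlt1, hSa⟩, ⟨tol_cov_aux hT hTb hlt2, hTb⟩⟩
end

section
/- Any tolerance on a lattice L (a reflexive symmetric relation compatible with join and meet) satisfies conditions (3) and (4) of the definition of a tolerance on the underlying poset of L: (3) if (x,y),(y,z) ∈ T ≠ L² then there exist u ≤ x,y,z and v ≥ x,y,z with (u,y),(y,v) ∈ T (namely u = x∧y∧z, v = x∨y∨z), and (4) if (x,y) ∈ T ≠ L² then there exists (z,u) ∈ T with z ≤ x,y ≤ u and (w,z),(w,u) ∈ T for all w with (w,x),(w,y) ∈ T (namely z = x∧y, u = x∨y). -/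
/-- Any tolerance on a lattice satisfies conditions (3) and (4) of the definition
of a tolerance on the underlying poset, with the explicit witnesses
`u = x ⊓ y ⊓ z`, `v = x ⊔ y ⊔ z` for (3) and `z = x ⊓ y`, `u = x ⊔ y` for (4). -/
theorem stmt_14 {L : Type*} [Lattice L] (T : L → L → Prop)
    (hT : LatticeTolerance T) :
    ((∃ a b, ¬ T a b) → ∀ x y z : L, T x y → T y z →
      x ⊓ y ⊓ z ≤ x ∧ x ⊓ y ⊓ z ≤ y ∧ x ⊓ y ⊓ z ≤ z ∧
      x ≤ x ⊔ y ⊔ z ∧ y ≤ x ⊔ y ⊔ z ∧ z ≤ x ⊔ y ⊔ z ∧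
      T (x ⊓ y ⊓ z) y ∧ T y (x ⊔ y ⊔ z)) ∧
    ((∃ a b, ¬ T a b) → ∀ x y : L, T x y →
      T (x ⊓ y) (x ⊔ y) ∧ x ⊓ y ≤ x ∧ x ⊓ y ≤ y ∧ x ≤ x ⊔ y ∧ y ≤ x ⊔ y ∧
      ∀ w, T w x → T w y → T w (x ⊓ y) ∧ T w (x ⊔ y)) := by

  obtain ⟨hrefl, hsym, hsup, hinf⟩ := hT
  constructor
  · intro _ x y z hxy hyz
    refine ⟨inf_le_left.trans inf_le_left, inf_le_left.trans inf_le_right, inf_le_right,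
      le_sup_left.trans le_sup_left, le_sup_right.trans le_sup_left, le_sup_right, ?_, ?_⟩
    · have h1 : T (x ⊓ y) y := by simpa using hinf x y y y hxy (hrefl y)
      have h2 : T ((x ⊓ y) ⊓ z) (y ⊓ y) := hinf _ _ _ _ h1 (hsym _ _ hyz)
      simpa using h2
    · have h1 : T (x ⊔ y) y := by simpa using hsup x y y y hxy (hrefl y)
      have h2 : T ((x ⊔ y) ⊔ z) (y ⊔ y) := hsup _ _ _ _ h1 (hsym _ _ hyz)
      simpa using hsym _ _ h2
  · intro _ x y hxy
    have hx : T (x ⊓ y) x := by simpa [inf_comm] using hinf y x x x (hsym _ _ hxy) (hrefl x)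
    have hy : T (x ⊓ y) y := by simpa using hinf x y y y hxy (hrefl y)
    refine ⟨?_, inf_le_left, inf_le_right, le_sup_left, le_sup_right, ?_⟩
    · simpa using hsup _ _ _ _ hx hy
    · intro w hwx hwy
      constructor
      · simpa using hinf w x w y hwx hwy
      · simpa using hsup w x w y hwx hwy
end
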